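/- For every k ≥ 2, let v = s_{2k}·b, so v^rev = b·b·a·x_{2k}. The left-special circular factors of v^rev are exactly the prefixes of x_{2k-1}·b together with the prefixes of b·a·x_{2k-2}. -/
import Mathlib


namespace BWT

/-- The two-letter ordered alphabet `{a, b}` with `a < b`, encoded as `Bool` with `a = false`. -/
abbrev Letter := Bool

/-- The letter `a`. -/
abbrev la : Letter := false

/-- The letter `b`. -/
abbrev lb : Letter := true

/-- A (binary) word. -/
abbrev Word := List Letter

/-- All conjugates (rotations) of a word, listed by rotation amount. -/
def rotations (w : Word) : List Word := (List.range w.length).map w.rotate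

/-- A word is primitive if all of its `|w|` conjugates are distinct. -/
def Primitive (w : Word) : Prop := (rotations w).Nodup

/-- The conjugates of `w`, sorted lexicographically. -/
def sortedRotations (w : Word) : List Word := (rotations w).insertionSort (· ≤ ·)

/-- The Burrows–Wheeler transform: last letters of the lexicographically sorted conjugates. -/
def bwt (w : Word) : Word := (sortedRotations w).map (fun u => u.getLastD la)

/-- Number of maximal equal-letter runs of a word. -/
def runs (w : Word) : ℕ := (w.destutter (· ≠ ·)).length

/-- `r(w)`: the number of runs of the BWT of `w`. -/
def rr (w : Word) : ℕ := runs (bwt w)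

/-- The runs-ratio `ρ(w)`. -/
def rho (w : Word) : ℚ :=
  max ((rr w : ℚ) / (rr w.reverse : ℚ)) ((rr w.reverse : ℚ) / (rr w : ℚ))

/-- `n`-th power (concatenation) of a word. -/
def wpow (w : Word) : ℕ → Word
  | 0 => []
  | n + 1 => w ++ wpow w n

/-- Standard words for the directive sequence `d`:
`s 0 = b`, `s 1 = a`, `s (i+2) = (s (i+1))^(d i) · s i`. -/
def std (d : ℕ → ℕ) : ℕ → Word
  | 0 => [lb]
  | 1 => [la]
  | n + 2 => wpow (std d (n + 1)) (d n) ++ std d n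

/-- Fibonacci words: `s 0 = b`, `s 1 = a`, `s (i+2) = s (i+1) · s i`. -/
def fw : ℕ → Word
  | 0 => [lb]
  | 1 => [la]
  | n + 2 => fw (n + 1) ++ fw n

/-- Fibonacci numbers with `F 0 = F 1 = 1`. -/
def fib : ℕ → ℕ
  | 0 => 1
  | 1 => 1
  | n + 2 => fib (n + 1) + fib n

/-- The word `x i`, i.e. the Fibonacci word of order `i` with its last two letters removed
(so that `s_{2k} = x_{2k}·ab` and `s_{2k+1} = x_{2k+1}·ba`). -/
def x (i : ℕ) : Word := (fw i).take ((fw i).length - 2)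

/-- `u` is a circular factor of `w`: a prefix of some conjugate of `w`. -/
def CircFactor (u w : Word) : Prop := ∃ i < w.length, u <+: w.rotate i

/-- A circular factor `u` is left-special in `w` if both `a·u` and `b·u` are circular factors. -/
def LeftSpecial (u w : Word) : Prop := CircFactor (la :: u) w ∧ CircFactor (lb :: u) w

/-- Number of occurrences of `u` as a circular factor of `w`. -/
def occ (u w : Word) : ℕ :=
  ((List.range w.length).filter (fun j => decide (u <+: w.rotate j))).length

end BWT

open BWT
open scoped Classical

lemma len_fw : ∀ m, (fw m).length = fib m
  | 0 => rfl
  | 1 => rfl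
  | (m+2) => by
    show (fw (m+1) ++ fw m).length = fib (m+1) + fib m
    simp [len_fw (m+1), len_fw m]

lemma fib_pos (m : ℕ) : 1 ≤ fib m := by
  induction m using Nat.strong_induction_on with
  | _ m ih =>
    match m with
    | 0 => exact le_refl 1
    | 1 => exact le_refl 1
    | (m+2) => show 1 ≤ fib (m+1) + fib m; have := ih m (by omega); omega

lemma fib_two_le (m : ℕ) : 2 ≤ fib (m+2) := by
  show 2 ≤ fib (m+1) + fib m; have := fib_pos m; have := fib_pos (m+1); omega

lemma fib_three_le (m : ℕ) : 3 ≤ fib (m+3) := by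
  show 3 ≤ fib (m+2) + fib (m+1); have := fib_two_le m; have := fib_pos (m+1); omega

lemma len_x (i : ℕ) : (x i).length = fib i - 2 := by
  simp [x, len_fw]

def ee (m : ℕ) : Word := if m % 2 = 0 then [la, lb] else [lb, la]

lemma ee_two (m : ℕ) : ee (m+2) = ee m := by simp [ee, Nat.add_mod_right]

lemma QX : ∀ m, fw (m+2) = x (m+2) ++ ee m
  | 0 => rfl
  | 1 => rfl
  | (m+2) => by
    have h := QX m
    have hx : x (m+4) = fw (m+3) ++ x (m+2) := by
      have hlen : (fw (m+3) ++ x (m+2)).length = fib (m+4) - 2 := by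
        have := fib_two_le m
        have : fib (m+4) = fib (m+3) + fib (m+2) := rfl
        simp only [List.length_append, len_fw, len_x]
        omega
      calc x (m+4) = (fw (m+4)).take ((fw (m+4)).length - 2) := rfl
        _ = ((fw (m+3) ++ x (m+2)) ++ ee m).take (fib (m+4) - 2) := by
              rw [len_fw, show fw (m+4) = fw (m+3) ++ fw (m+2) from rfl, h, List.append_assoc]
        _ = fw (m+3) ++ x (m+2) := List.take_left' hlen
    show fw (m+3) ++ fw (m+2) = x (m+4) ++ ee (m+2)
    rw [hx, h, ee_two, List.append_assoc]

lemma X2 (m : ℕ) : x (m+4) = fw (m+3) ++ x (m+2) := by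
  have h := QX (m+2)
  have h2 : fw (m+4) = fw (m+3) ++ x (m+2) ++ ee (m+2) := by
    rw [show fw (m+4) = fw (m+3) ++ fw (m+2) from rfl, QX m, ee_two, List.append_assoc]
  exact List.append_cancel_right (h.symm.trans h2)

lemma L2X1 : ∀ m, fw m ++ fw (m+1) = x (m+2) ++ ee (m+1)
  | 0 => rfl
  | (m+1) => by
    have ih := L2X1 m
    have hX1 : x (m+3) = fw (m+1) ++ x (m+2) := by
      have h1 : fw (m+3) = x (m+3) ++ ee (m+1) := QX (m+1)
      have h2 : fw (m+3) = (fw (m+1) ++ x (m+2)) ++ ee (m+1) := by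
        rw [show fw (m+3) = (fw (m+1) ++ fw m) ++ fw (m+1) from rfl, List.append_assoc, ih,
          ← List.append_assoc]
      exact List.append_cancel_right (h1.symm.trans h2)
    show fw (m+1) ++ fw (m+2) = x (m+3) ++ ee (m+2)
    rw [hX1, QX m, ee_two, List.append_assoc]

lemma X1 (m : ℕ) : x (m+3) = fw (m+1) ++ x (m+2) := by
  have h1 : fw (m+3) = x (m+3) ++ ee (m+1) := QX (m+1)
  have h2 : fw (m+3) = (fw (m+1) ++ x (m+2)) ++ ee (m+1) := by
    rw [show fw (m+3) = (fw (m+1) ++ fw m) ++ fw (m+1) from rfl, List.append_assoc, L2X1 m,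
      ← List.append_assoc]
  exact List.append_cancel_right (h1.symm.trans h2)

lemma ee_rev (m : ℕ) : (ee (m+1)).reverse = ee m := by
  rcases Nat.mod_two_eq_zero_or_one m with h | h <;>
    simp [ee, h, Nat.add_mod, Nat.succ_mod_two_eq_zero_iff, Nat.succ_mod_two_eq_one_iff]

lemma pal : ∀ m, (x m).reverse = x m
  | 0 => rfl
  | 1 => rfl
  | 2 => rfl
  | 3 => rfl
  | (m+4) => by
    have hA : x (m+4) = x (m+3) ++ ee (m+1) ++ x (m+2) := by
      rw [X2 m, QX (m+1)]
    have hB : x (m+4) = x (m+2) ++ ee m ++ x (m+3) := by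
      rw [show x (m+4) = x (m+1+3) from rfl, X1 (m+1), QX m, List.append_assoc]
    rw [hA]; simp [List.reverse_append, pal (m+2), pal (m+3), ee_rev m]
    rw [← List.append_assoc, ← hB, hA]
    simp [List.append_assoc]

lemma fw_cons : ∀ m, ∃ z, fw (m+1) = la :: z
  | 0 => ⟨[], rfl⟩
  | (m+1) => by
    obtain ⟨z, hz⟩ := fw_cons m
    exact ⟨z ++ fw m, by rw [show fw (m+2) = fw (m+1) ++ fw m from rfl, hz]; rfl⟩

lemma x_cons : ∀ m, ∃ z, x (m+3) = la :: z := fun m => by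
  obtain ⟨z, hz⟩ := fw_cons m
  exact ⟨z ++ x (m+2), by rw [X1 m, hz]; rfl⟩

lemma x_ends : ∀ m, ∃ y, x (m+3) = y ++ [la]
  | 0 => ⟨[], rfl⟩
  | 1 => ⟨[la, lb], rfl⟩
  | (m+2) => by
    obtain ⟨y, hy⟩ := x_ends m
    exact ⟨fw (m+4) ++ y, by rw [show x (m+5) = x (m+1+4) from rfl, X2 (m+1), hy, List.append_assoc]⟩

-- the decompositions (A) and (B) at even levels
lemma decompA (j : ℕ) : x (2*j+4) = x (2*j+3) ++ [lb, la] ++ x (2*j+2) := by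
  have h1 : ee (2*j+1) = [lb, la] := by simp [ee, Nat.add_mod, Nat.mul_mod_right]
  rw [show x (2*j+4) = x (2*j+3) ++ ee (2*j+1) ++ x (2*j+2) from by rw [X2 (2*j), QX (2*j+1)], h1]

lemma decompB (j : ℕ) : x (2*j+4) = x (2*j+2) ++ [la, lb] ++ x (2*j+3) := by
  have h1 : ee (2*j) = [la, lb] := by simp [ee, Nat.mul_mod_right]
  rw [show x (2*j+4) = x (2*j+2) ++ ee (2*j) ++ x (2*j+3) from
    by rw [show x (2*j+4) = x (2*j+1+3) from rfl, X1 (2*j+1), QX (2*j), List.append_assoc], h1]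

lemma w_form (j : ℕ) : (fw (2*j+4) ++ [lb]).reverse = [lb, lb, la] ++ x (2*j+4) := by
  have h1 : ee (2*j+2) = [la, lb] := by simp [ee, Nat.add_mod, Nat.mul_mod_right]
  rw [show fw (2*j+4) = x (2*j+4) ++ ee (2*j+2) from QX (2*j+2), h1]
  simp [List.reverse_append, pal]

section Counting
open Finset
variable (w : Word)

def Cset (ℓ : ℕ) : Finset Word := (Finset.range w.length).image (fun i => (w.rotate i).take ℓ)

variable {w}

lemma mem_Cset {ℓ : ℕ} (hℓ : ℓ ≤ w.length) {u : Word} :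
    u ∈ Cset w ℓ ↔ CircFactor u w ∧ u.length = ℓ := by
  simp only [Cset, Finset.mem_image, Finset.mem_range]
  constructor
  · rintro ⟨i, hi, rfl⟩
    refine ⟨⟨i, hi, List.take_prefix _ _⟩, ?_⟩
    simp only [List.length_take, List.length_rotate]
    omega
  · rintro ⟨⟨i, hi, hpre⟩, hlen⟩
    exact ⟨i, hi, by rw [List.prefix_iff_eq_take.mp hpre, hlen]⟩

lemma head_tail (hw : w ≠ []) (i : ℕ) :
    ∃ (c : Letter) (t : Word), w.rotate i = c :: t ∧ w.rotate (i+1) = t ++ [c] := by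
  have hne : w.rotate i ≠ [] := by
    intro h
    have := List.length_rotate w i
    rw [h] at this
    exact hw (List.length_eq_zero_iff.mp this.symm)
  obtain ⟨c, t, h⟩ := List.exists_cons_of_ne_nil hne
  refine ⟨c, t, h, ?_⟩
  rw [← List.rotate_rotate, h, show (1:ℕ) = 0 + 1 from rfl, List.rotate_cons_succ,
    List.rotate_zero]

lemma tail_take {ℓ i : ℕ} (hi : i < w.length) (hℓ : ℓ + 1 ≤ w.length) :
    ((w.rotate i).take (ℓ+1)).tail = (w.rotate ((i+1) % w.length)).take ℓ := by
  have hw : w ≠ [] := by intro h; rw [h] at hi; simp at hi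
  obtain ⟨c, t, h1, h2⟩ := head_tail hw i
  have hlt : t.length = w.length - 1 := by
    have h3 := List.length_rotate w i
    rw [h1] at h3
    simp at h3
    omega
  rw [List.rotate_mod, h1, h2, List.take_succ_cons, List.tail_cons,
    List.take_append_of_le_length (by omega)]

lemma maps_tail {ℓ : ℕ} (hℓ : ℓ + 1 ≤ w.length) :
    ∀ v ∈ Cset w (ℓ+1), v.tail ∈ Cset w ℓ := by
  intro v hv
  obtain ⟨i, hi, rfl⟩ := Finset.mem_image.mp hv
  rw [Finset.mem_range] at hi
  exact Finset.mem_image.mpr ⟨(i+1) % w.length,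
    Finset.mem_range.mpr (Nat.mod_lt _ (by omega)), (tail_take hi hℓ).symm⟩

lemma exists_ext {ℓ : ℕ} (hℓ : ℓ < w.length) {u : Word} (hu : u ∈ Cset w ℓ) :
    ∃ c : Letter, c :: u ∈ Cset w (ℓ+1) := by
  obtain ⟨i, hi, rfl⟩ := Finset.mem_image.mp hu
  rw [Finset.mem_range] at hi
  set n := w.length with hn
  have hn0 : 0 < n := by omega
  have hw : w ≠ [] := by intro h; rw [h] at hn; simp [hn] at hn0
  set i' := (i + (n-1)) % n with hi'
  have hi'n : i' < n := Nat.mod_lt _ hn0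
  have hkey : w.rotate (i' + 1) = w.rotate i := by
    conv_lhs => rw [← List.rotate_mod]
    rw [show w.length = n from rfl]
    congr 1
    rw [hi', Nat.mod_add_mod, show i + (n-1) + 1 = i + n from by omega,
      Nat.add_mod_right]
    exact Nat.mod_eq_of_lt hi
  obtain ⟨c, t, h1, h2⟩ := head_tail hw i'
  have hlt : t.length = n - 1 := by
    have h3 := List.length_rotate w i'
    rw [h1] at h3
    simp at h3
    omega
  refine ⟨c, Finset.mem_image.mpr ⟨i', Finset.mem_range.mpr hi'n, ?_⟩⟩
  rw [h1, List.take_succ_cons]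
  congr 1
  rw [← hkey, h2, List.take_append_of_le_length (by omega)]

end Counting

open Finset in
lemma card_step {w : Word} (ℓ : ℕ) (hℓ : ℓ < w.length) :
    (Cset w (ℓ+1)).card
      = (Cset w ℓ).card + ((Cset w ℓ).filter (fun u => LeftSpecial u w)).card := by
  classical
  rw [Finset.card_eq_sum_card_fiberwise (f := List.tail) (t := Cset w ℓ) (maps_tail (by omega))]
  have hfib : ∀ u ∈ Cset w ℓ,
      ((Cset w (ℓ+1)).filter (fun v => v.tail = u)).card
        = 1 + (if LeftSpecial u w then 1 else 0) := by
    intro u hu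
    have hulen : u.length = ℓ := ((mem_Cset (le_of_lt hℓ)).mp hu).2
    have hset : (Cset w (ℓ+1)).filter (fun v => v.tail = u)
        = ({la :: u, lb :: u} : Finset Word).filter (fun v => v ∈ Cset w (ℓ+1)) := by
      ext v
      simp only [Finset.mem_filter, Finset.mem_insert, Finset.mem_singleton]
      constructor
      · rintro ⟨hv, htl⟩
        have hvlen : v.length = ℓ + 1 := ((mem_Cset hℓ).mp hv).2
        refine ⟨?_, hv⟩
        match v with
        | [] => simp at hvlen
        | c :: t =>
          simp only [List.tail_cons] at htl
          subst htl
          cases c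
          · exact Or.inl rfl
          · exact Or.inr rfl
      · rintro ⟨(rfl | rfl), hv⟩ <;> exact ⟨hv, rfl⟩
    rw [hset]
    have hne : (la :: u) ≠ (lb :: u) := by simp [la, lb]
    have hmm : ∀ c : Letter, (c :: u ∈ Cset w (ℓ+1)) ↔ CircFactor (c :: u) w := by
      intro c
      rw [mem_Cset (by omega)]
      simp [hulen]
    have hex : (la :: u ∈ Cset w (ℓ+1)) ∨ (lb :: u ∈ Cset w (ℓ+1)) := by
      obtain ⟨c, hc⟩ := exists_ext hℓ hu
      cases c
      · exact Or.inl hc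
      · exact Or.inr hc
    have hLS : LeftSpecial u w ↔ (la::u ∈ Cset w (ℓ+1)) ∧ (lb::u ∈ Cset w (ℓ+1)) := by
      rw [hmm, hmm]
      exact Iff.rfl
    by_cases hA : la :: u ∈ Cset w (ℓ+1) <;> by_cases hB : lb :: u ∈ Cset w (ℓ+1) <;>
      simp [Finset.filter_insert, Finset.filter_singleton, hA, hB, hLS, hne] <;>
      tauto
  rw [Finset.sum_congr rfl hfib, Finset.sum_add_distrib, Finset.sum_const, smul_eq_mul, mul_one]
  congr 1
  exact (Finset.card_filter _ _).symm

lemma card_Cset_zero {w : Word} (hw : w ≠ []) : (Cset w 0).card = 1 := by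
  have : Cset w 0 = {([] : Word)} := by
    ext v
    simp only [Cset, Finset.mem_image, Finset.mem_range, List.take_zero,
      Finset.mem_singleton]
    constructor
    · rintro ⟨i, _, h⟩; exact h.symm
    · rintro rfl; exact ⟨0, List.length_pos_iff.mpr hw, rfl⟩
  rw [this, Finset.card_singleton]

lemma card_Cset_le {w : Word} (ℓ : ℕ) : (Cset w ℓ).card ≤ w.length := by
  refine le_trans Finset.card_image_le ?_
  simp

lemma telescope {w : Word} (hw : w ≠ []) :
    ∀ L, L ≤ w.length →
      (Cset w L).card
        = 1 + ∑ ℓ ∈ Finset.range L, ((Cset w ℓ).filter (fun u => LeftSpecial u w)).card := by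
  intro L
  induction L with
  | zero => intro _; simp [card_Cset_zero hw]
  | succ L ih =>
    intro hL
    rw [card_step L (by omega), ih (by omega), Finset.sum_range_succ]
    omega

lemma circ_of_split {w u : Word} (A B : Word) (hw : w = A ++ B) (hB : B ≠ [])
    (hu : u <+: B ++ A) : CircFactor u w := by
  refine ⟨A.length, ?_, ?_⟩
  · rw [hw, List.length_append]
    have := List.length_pos_iff.mpr hB
    omega
  · rw [hw, List.rotate_eq_drop_append_take (by simp), List.drop_left, List.take_left]
    exact hu

def Wd (j : ℕ) : Word := [lb, lb, la] ++ x (2*j+4)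

lemma x4_ne (j : ℕ) : x (2*j+4) ≠ [] := by
  have h1 : (x (2*j+4)).length = fib (2*j+4) - 2 := len_x _
  have h2 : 3 ≤ fib (2*j+4) := by have h := fib_three_le (2*j+1); rwa [show 2*j+1+3 = 2*j+4 from by omega] at h
  intro h
  rw [h] at h1
  simp at h1
  omega

lemma len_Wd (j : ℕ) : (Wd j).length = fib (2*j+4) + 1 := by
  have h2 : 3 ≤ fib (2*j+4) := by have h := fib_three_le (2*j+1); rwa [show 2*j+1+3 = 2*j+4 from by omega] at h
  simp [Wd, len_x]
  omega

lemma hP1 (j : ℕ) (u : Word) (hu : u <+: x (2*j+3) ++ [lb]) :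
    CircFactor u (Wd j) ∧ LeftSpecial u (Wd j) := by
  refine ⟨?_, ?_, ?_⟩
  · -- rotation 3
    refine circ_of_split [lb,lb,la] (x (2*j+4)) rfl (x4_ne j) ?_
    have h : x (2*j+4) ++ [lb,lb,la]
        = (x (2*j+3) ++ [lb]) ++ ([la] ++ x (2*j+2) ++ [lb,lb,la]) := by
      simp [decompA j]
    rw [h]
    exact hu.trans (List.prefix_append _ _)
  · -- a·u, rotation 2
    refine circ_of_split [lb,lb] ([la] ++ x (2*j+4)) rfl (by simp) ?_
    have h : ([la] ++ x (2*j+4)) ++ [lb,lb]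
        = la :: ((x (2*j+3) ++ [lb]) ++ ([la] ++ x (2*j+2) ++ [lb,lb])) := by
      simp [decompA j]
    rw [h]
    exact List.cons_prefix_cons.mpr ⟨rfl, hu.trans (List.prefix_append _ _)⟩
  · -- b·u, rotation F2+2
    refine circ_of_split ([lb,lb,la] ++ x (2*j+2) ++ [la]) ([lb] ++ x (2*j+3))
      (by simp [Wd, decompB j]) (by simp) ?_
    have h : ([lb] ++ x (2*j+3)) ++ ([lb,lb,la] ++ x (2*j+2) ++ [la])
        = lb :: ((x (2*j+3) ++ [lb]) ++ ([lb,la] ++ x (2*j+2) ++ [la])) := by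
      simp
    rw [h]
    exact List.cons_prefix_cons.mpr ⟨rfl, hu.trans (List.prefix_append _ _)⟩

lemma hP2 (j : ℕ) (u : Word) (hu : u <+: [lb, la] ++ x (2*j+2)) :
    CircFactor u (Wd j) ∧ LeftSpecial u (Wd j) := by
  refine ⟨?_, ?_, ?_⟩
  · -- rotation 1
    refine circ_of_split [lb] ([lb,la] ++ x (2*j+4)) rfl (by simp) ?_
    have h : ([lb,la] ++ x (2*j+4)) ++ [lb]
        = ([lb,la] ++ x (2*j+2)) ++ ([la,lb] ++ x (2*j+3) ++ [lb]) := by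
      simp [decompB j]
    rw [h]
    exact hu.trans (List.prefix_append _ _)
  · -- a·u, rotation F1
    obtain ⟨y, hy⟩ := x_ends (2*j)
    refine circ_of_split ([lb,lb,la] ++ y) ([la,lb,la] ++ x (2*j+2))
      (by simp [Wd, decompA j, hy]) (by simp) ?_
    have h : ([la,lb,la] ++ x (2*j+2)) ++ ([lb,lb,la] ++ y)
        = la :: (([lb,la] ++ x (2*j+2)) ++ ([lb,lb,la] ++ y)) := by
      simp
    rw [h]
    exact List.cons_prefix_cons.mpr ⟨rfl, hu.trans (List.prefix_append _ _)⟩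
  · -- b·u, rotation 0
    refine circ_of_split [] (Wd j) rfl (by simp [Wd]) ?_
    have h : Wd j ++ [] = lb :: (([lb,la] ++ x (2*j+2)) ++ ([la,lb] ++ x (2*j+3))) := by
      simp [Wd, decompB j]
    rw [h]
    exact List.cons_prefix_cons.mpr ⟨rfl, hu.trans (List.prefix_append _ _)⟩

noncomputable def Eset (j ℓ : ℕ) : Finset Word :=
  ({(x (2*j+3) ++ [lb]).take ℓ, ([lb,la] ++ x (2*j+2)).take ℓ} : Finset Word).filter
    (fun u => u.length = ℓ)

lemma fib_rec (m : ℕ) : fib (m+2) = fib (m+1) + fib m := rfl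

lemma cardE (j ℓ : ℕ) :
    (Eset j ℓ).card
      = (if ℓ ≤ fib (2*j+3) - 1 then 1 else 0)
        + (if 1 ≤ ℓ ∧ ℓ ≤ fib (2*j+2) then 1 else 0) := by
  classical
  have hF1 : 3 ≤ fib (2*j+3) := fib_three_le (2*j)
  have hF2 : 2 ≤ fib (2*j+2) := fib_two_le (2*j)
  have hrec : fib (2*j+3) = fib (2*j+2) + fib (2*j+1) := by
    rw [show 2*j+3 = 2*j+1+2 from by omega]; exact fib_rec _
  have hp : 1 ≤ fib (2*j+1) := fib_pos _
  have hl1 : (x (2*j+3) ++ [lb]).length = fib (2*j+3) - 1 := by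
    simp [len_x]; omega
  have hl2 : ([lb,la] ++ x (2*j+2)).length = fib (2*j+2) := by
    simp [len_x]; omega
  have ht1 : ((x (2*j+3) ++ [lb]).take ℓ).length = min ℓ (fib (2*j+3) - 1) := by
    simp [hl1]
  have ht2 : (([lb,la] ++ x (2*j+2)).take ℓ).length = min ℓ (fib (2*j+2)) := by
    rw [List.length_take, hl2]
  rcases Nat.eq_zero_or_pos ℓ with rfl | hpos
  · have : Eset j 0 = {([] : Word)} := by
      ext v
      simp [Eset]
    rw [this]
    simp
  · by_cases h1 : ℓ ≤ fib (2*j+3) - 1 <;> by_cases h2 : ℓ ≤ fib (2*j+2)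
    · -- both present, distinct
      obtain ⟨z, hz⟩ := x_cons (2*j)
      obtain ⟨m, rfl⟩ := Nat.exists_eq_add_of_lt hpos
      have hna : (x (2*j+3) ++ [lb]).take (0+m+1) = la :: ((z ++ [lb]).take (0+m)) := by
        rw [hz]; rfl
      have hnb : (([lb,la] ++ x (2*j+2))).take (0+m+1) = lb :: (([la] ++ x (2*j+2)).take (0+m)) := rfl
      have hne : (x (2*j+3) ++ [lb]).take (0+m+1) ≠ ([lb,la] ++ x (2*j+2)).take (0+m+1) := by
        rw [hna, hnb]
        simp [la, lb]
      rw [Eset, Finset.filter_insert, Finset.filter_singleton,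
        if_pos (by omega : ((x (2*j+3) ++ [lb]).take (0+m+1)).length = 0+m+1),
        if_pos (by omega : ((([lb,la] ++ x (2*j+2))).take (0+m+1)).length = 0+m+1)]
      rw [Finset.card_insert_of_notMem (by simpa using hne), if_pos h1, if_pos ⟨by omega, h2⟩,
        Finset.card_singleton]
    · rw [Eset, Finset.filter_insert, Finset.filter_singleton,
        if_pos (by omega : ((x (2*j+3) ++ [lb]).take ℓ).length = ℓ),
        if_neg (by omega : ¬ ((([lb,la] ++ x (2*j+2))).take ℓ).length = ℓ)]
      simp [h1, h2]
    · omega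
    · rw [Eset, Finset.filter_insert, Finset.filter_singleton,
        if_neg (by omega : ¬ ((x (2*j+3) ++ [lb]).take ℓ).length = ℓ),
        if_neg (by omega : ¬ ((([lb,la] ++ x (2*j+2))).take ℓ).length = ℓ)]
      simp [h1, h2]

lemma len_P1 (j : ℕ) : (x (2*j+3) ++ [lb]).length = fib (2*j+3) - 1 := by
  have hF1 : 3 ≤ fib (2*j+3) := fib_three_le (2*j)
  simp [len_x]
  omega

lemma len_P2 (j : ℕ) : ([lb,la] ++ x (2*j+2)).length = fib (2*j+2) := by
  have hF2 : 2 ≤ fib (2*j+2) := fib_two_le (2*j)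
  simp [len_x]
  omega

lemma E_sub (j ℓ : ℕ) (hℓ : ℓ ≤ (Wd j).length) :
    Eset j ℓ ⊆ (Cset (Wd j) ℓ).filter (fun u => LeftSpecial u (Wd j)) := by
  intro u hu
  simp only [Eset, Finset.mem_filter, Finset.mem_insert, Finset.mem_singleton] at hu
  obtain ⟨h12, hlen⟩ := hu
  have key : CircFactor u (Wd j) ∧ LeftSpecial u (Wd j) := by
    rcases h12 with rfl | rfl
    · exact hP1 j _ (List.take_prefix _ _)
    · exact hP2 j _ (List.take_prefix _ _)
  exact Finset.mem_filter.mpr ⟨(mem_Cset hℓ).mpr ⟨key.1, hlen⟩, key.2⟩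

lemma sumE (j : ℕ) :
    ∑ ℓ ∈ Finset.range (fib (2*j+4) + 1), (Eset j ℓ).card = fib (2*j+4) := by
  classical
  have hF1 : 3 ≤ fib (2*j+3) := fib_three_le (2*j)
  have hF2 : 2 ≤ fib (2*j+2) := fib_two_le (2*j)
  have hrec4 : fib (2*j+4) = fib (2*j+3) + fib (2*j+2) := by
    rw [show 2*j+4 = 2*j+2+2 from by omega]; exact fib_rec _
  rw [Finset.sum_congr rfl (fun ℓ _ => cardE j ℓ), Finset.sum_add_distrib]
  have e1 : ∑ ℓ ∈ Finset.range (fib (2*j+4) + 1), (if ℓ ≤ fib (2*j+3) - 1 then 1 else 0)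
      = fib (2*j+3) := by
    rw [← Finset.card_filter]
    have h : (Finset.range (fib (2*j+4) + 1)).filter (fun ℓ => ℓ ≤ fib (2*j+3) - 1)
        = Finset.range (fib (2*j+3)) := by
      ext a
      simp only [Finset.mem_filter, Finset.mem_range]
      omega
    rw [h, Finset.card_range]
  have e2 : ∑ ℓ ∈ Finset.range (fib (2*j+4) + 1), (if 1 ≤ ℓ ∧ ℓ ≤ fib (2*j+2) then 1 else 0)
      = fib (2*j+2) := by
    rw [← Finset.card_filter]
    have h : (Finset.range (fib (2*j+4) + 1)).filter (fun ℓ => 1 ≤ ℓ ∧ ℓ ≤ fib (2*j+2))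
        = Finset.Ico 1 (fib (2*j+2) + 1) := by
      ext a
      simp only [Finset.mem_filter, Finset.mem_range, Finset.mem_Ico]
      omega
    rw [h, Nat.card_Ico]
    omega
  rw [e1, e2]
  omega

theorem main (j : ℕ) (u : Word) :
    (CircFactor u (Wd j) ∧ LeftSpecial u (Wd j)) ↔
      (u <+: x (2*j+3) ++ [lb] ∨ u <+: [lb,la] ++ x (2*j+2)) := by
  classical
  have hnval : (Wd j).length = fib (2*j+4) + 1 := len_Wd j
  constructor
  · rintro ⟨hcf, hls⟩
    obtain ⟨i, hi, hpre⟩ := hls.1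
    have hub : u.length + 1 ≤ (Wd j).length := by
      have h := hpre.length_le
      simpa [List.length_rotate] using h
    have hEq : ∀ ℓ' ∈ Finset.range ((Wd j).length),
        ((Cset (Wd j) ℓ').filter (fun u => LeftSpecial u (Wd j))) = Eset j ℓ' := by
      have hwne : Wd j ≠ [] := by simp [Wd]
      have htel := telescope hwne ((Wd j).length) le_rfl
      have hle : (Cset (Wd j) ((Wd j).length)).card ≤ (Wd j).length := card_Cset_le _
      have hsumE : ∑ ℓ' ∈ Finset.range ((Wd j).length), (Eset j ℓ').card
          = fib (2*j+4) := by
        rw [hnval]; exact sumE j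
      have hsub : ∀ ℓ' ∈ Finset.range ((Wd j).length),
          (Eset j ℓ').card
            ≤ ((Cset (Wd j) ℓ').filter (fun u => LeftSpecial u (Wd j))).card := by
        intro ℓ' h
        exact Finset.card_le_card (E_sub j ℓ' (le_of_lt (Finset.mem_range.mp h)))
      have hsum_le : ∑ ℓ' ∈ Finset.range ((Wd j).length),
          ((Cset (Wd j) ℓ').filter (fun u => LeftSpecial u (Wd j))).card
            ≤ fib (2*j+4) := by
        omega
      have hsums : ∑ ℓ' ∈ Finset.range ((Wd j).length), (Eset j ℓ').card
          = ∑ ℓ' ∈ Finset.range ((Wd j).length),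
              ((Cset (Wd j) ℓ').filter (fun u => LeftSpecial u (Wd j))).card := by
        have := Finset.sum_le_sum hsub
        omega
      have hcards := (Finset.sum_eq_sum_iff_of_le hsub).mp hsums
      intro ℓ' hℓ'
      exact (Finset.eq_of_subset_of_card_le
        (E_sub j ℓ' (le_of_lt (Finset.mem_range.mp hℓ')))
        (le_of_eq (hcards ℓ' hℓ').symm)).symm
    have hmem : u ∈ (Cset (Wd j) u.length).filter (fun v => LeftSpecial v (Wd j)) :=
      Finset.mem_filter.mpr ⟨(mem_Cset (by omega)).mpr ⟨hcf, rfl⟩, hls⟩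
    rw [hEq u.length (Finset.mem_range.mpr (by omega))] at hmem
    simp only [Eset, Finset.mem_filter, Finset.mem_insert, Finset.mem_singleton] at hmem
    rcases hmem.1 with h' | h'
    · rw [h']; exact Or.inl (List.take_prefix _ _)
    · rw [h']; exact Or.inr (List.take_prefix _ _)
  · rintro (h | h)
    · exact hP1 j u h
    · exact hP2 j u h


open BWT in
/-- for `k ≥ 2` and `v = s_{2k}·b` (so `v^rev = b·b·a·x_{2k}`), the left-special
circular factors of `v^rev` are exactly the prefixes of `x_{2k-1}·b` together with the prefixes
of `b·a·x_{2k-2}`. -/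
theorem stmt8 (k : ℕ) (hk : 2 ≤ k) :
    ∀ u : Word,
      (CircFactor u ((fw (2*k) ++ [lb]).reverse) ∧ LeftSpecial u ((fw (2*k) ++ [lb]).reverse)) ↔
      (u <+: x (2*k-1) ++ [lb] ∨ u <+: [lb, la] ++ x (2*k-2)) := by
  obtain ⟨j, rfl⟩ : ∃ j, k = j + 2 := ⟨k - 2, by omega⟩
  intro u
  rw [show 2*(j+2)-1 = 2*j+3 from by omega, show 2*(j+2)-2 = 2*j+2 from by omega,
    show 2*(j+2) = 2*j+4 from by ring, w_form j]
  exact main j u
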